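/- arXiv:2406.01823 — 5 statements merged into one kernel-verified Lean document; each statement's English description precedes it below -/
import Mathlib

section
/- Let G be a finite DAG, S ⊆ V a prefix subset, and I ⊆ V any subset. Define Des(v, I) for v ∈ I as the set of vertices u ∉ I such that there exists a directed path from v to u intersecting I only at v. Then the union of Des(v, I) over v ∈ I \ S equals Des(I \ S) \ (I \ S), where Des(A) is the set of strict descendants of vertices in A. -/
open Relation

/-- Undirected adjacency induced by a directed edge relation. -/
def Adjacent {V : Type*} (E : V → V → Prop) (a b : V) : Prop := E a b ∨ E b a

/-- `x` is a collider on the path (vertex list) `p`: both neighboring edges point into `x`. -/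
def IsCollider {V : Type*} (E : V → V → Prop) (p : List V) (x : V) : Prop :=
  ∃ l1 a b l2, p = l1 ++ a :: x :: b :: l2 ∧ E a x ∧ E b x

/-- A path (vertex list) is active given a conditioning set `C`:
every collider is in `C` or has a descendant in `C`, and no non-collider is in `C`. -/
def ActivePath {V : Type*} (E : V → V → Prop) (C : Set V) (p : List V) : Prop :=
  (∀ x ∈ p, IsCollider E p x → ∃ d, ReflTransGen E x d ∧ d ∈ C) ∧
  (∀ x ∈ p, ¬ IsCollider E p x → x ∉ C)

/-- `p` is a path between `u` and `v`: consecutively adjacent, distinct vertices. -/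
def IsPathBetween {V : Type*} (E : V → V → Prop) (u v : V) (p : List V) : Prop :=
  p.Chain' (Adjacent E) ∧ p.Nodup ∧ p.head? = some u ∧ p.getLast? = some v

/-- `u` and `v` are d-connected given `C`. -/
def DConn {V : Type*} (E : V → V → Prop) (C : Set V) (u v : V) : Prop :=
  ∃ p, IsPathBetween E u v p ∧ ActivePath E C p

/-- `u` and `v` are d-separated given `C`. -/
def DSep {V : Type*} (E : V → V → Prop) (C : Set V) (u v : V) : Prop :=
  ¬ DConn E C u v

/-- `S` is a prefix (ancestrally closed) subset. -/
def IsPrefixSet {V : Type*} (E : V → V → Prop) (S : Set V) : Prop :=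
  ∀ u v, E u v → v ∈ S → u ∈ S

/-- Source vertices of the induced subgraph on `T`: vertices of `T` with no parent in `T`. -/
def srcOf {V : Type*} (E : V → V → Prop) (T : Set V) : Set V :=
  {v | v ∈ T ∧ ∀ u, E u v → u ∉ T}

/-- The edge relation is acyclic. -/
def Acyclic {V : Type*} (E : V → V → Prop) : Prop :=
  ∀ v, ¬ TransGen E v v

/-- `p` is a directed path from `u` to `v` (all edges forward). -/
def DirPath {V : Type*} (E : V → V → Prop) (u v : V) (p : List V) : Prop :=
  p.Chain' E ∧ p.head? = some u ∧ p.getLast? = some v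

/-- `Des(v, I)`: vertices `u ∉ I` reachable from `v` by a directed path whose only vertex
in `I` is `v`. -/
def DesAvoiding {V : Type*} (E : V → V → Prop) (I : Set V) (v : V) : Set V :=
  {u | u ∉ I ∧ ∃ p, DirPath E v u p ∧ ∀ x ∈ p, x ∈ I → x = v}

section

variable {V : Type*} {E : V → V → Prop}

theorem DirPath.reflTransGen {a u : V} {p : List V} (hp : DirPath E a u p) :
    ReflTransGen E a u := by
  obtain ⟨hchain, hhead, hlast⟩ := hp
  obtain ⟨t, rfl⟩ : ∃ t, p = a :: t := List.head?_eq_some_iff.mp hhead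
  exact List.relationReflTransGen_of_exists_isChain_cons t hchain
    (Option.some_inj.mp ((List.getLast?_eq_some_getLast _).symm.trans hlast))

theorem DirPath.concat {a b u : V} {p : List V} (hp : DirPath E a b p) (hbu : E b u) :
    DirPath E a u (p ++ [u]) := by
  obtain ⟨hchain, hhead, hlast⟩ := hp
  refine ⟨List.IsChain.append hchain (List.isChain_singleton u) ?_, ?_, by simp⟩
  · simpa [hlast] using hbu
  · rw [List.head?_append, hhead]; rfl

theorem IsPrefixSet.mem_of_reflTransGen {S : Set V} (hS : IsPrefixSet E S) {a u : V}
    (h : ReflTransGen E a u) (hu : u ∈ S) : a ∈ S := by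
  induction h with
  | refl => exact hu
  | tail _ hbu ih => exact ih (hS _ _ hbu hu)

theorem mem_desAvoiding_of_rel {I : Set V} {v u : V} (hvu : E v u) (hu : u ∉ I) :
    u ∈ DesAvoiding E I v := by
  refine ⟨hu, [v, u], ⟨List.isChain_pair.mpr hvu, rfl, rfl⟩, ?_⟩
  rintro x hx hxI
  rcases List.mem_pair.mp hx with rfl | rfl
  · rfl
  · exact absurd hxI hu

theorem mem_desAvoiding_of_mem_of_rel {I : Set V} {v b u : V} (hb : b ∈ DesAvoiding E I v)
    (hbu : E b u) (hu : u ∉ I) : u ∈ DesAvoiding E I v := by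
  obtain ⟨-, p, hp, hpI⟩ := hb
  refine ⟨hu, p ++ [u], hp.concat hbu, ?_⟩
  rintro x hx hxI
  rcases List.mem_append.mp hx with hx | hx
  · exact hpI x hx hxI
  · exact absurd (List.mem_singleton.mp hx ▸ hxI) hu

theorem transGen_of_mem_desAvoiding {I : Set V} {v u : V} (hv : v ∈ I)
    (hu : u ∈ DesAvoiding E I v) : TransGen E v u := by
  obtain ⟨huI, p, hp, -⟩ := hu
  refine (reflTransGen_iff_eq_or_transGen.mp hp.reflTransGen).resolve_left ?_
  rintro rfl
  exact huI hv

/-- The last vertex of `I` on a path from `a ∈ I` to `u ∉ I`. -/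
theorem exists_mem_desAvoiding_of_reflTransGen {I : Set V} {a u : V}
    (h : ReflTransGen E a u) (ha : a ∈ I) (hu : u ∉ I) :
    ∃ v ∈ I, ReflTransGen E a v ∧ u ∈ DesAvoiding E I v := by
  induction h with
  | refl => exact absurd ha hu
  | @tail b u hab hbu ih =>
    by_cases hb : b ∈ I
    · exact ⟨b, hb, hab, mem_desAvoiding_of_rel hbu hu⟩
    · obtain ⟨v, hv, hav, hbv⟩ := ih hb
      exact ⟨v, hv, hav, mem_desAvoiding_of_mem_of_rel hbv hbu hu⟩

end

theorem union_desAvoiding_eq_general {V : Type*} (E : V → V → Prop)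
    (S I : Set V) (hS : IsPrefixSet E S) :
    (⋃ v ∈ I \ S, DesAvoiding E I v)
      = {u | ∃ a ∈ I \ S, TransGen E a u} \ (I \ S) := by
  ext u
  simp only [Set.mem_iUnion, Set.mem_sdiff, Set.mem_ofPred_eq, exists_prop]
  constructor
  · rintro ⟨v, hv, hu⟩
    exact ⟨⟨v, hv, transGen_of_mem_desAvoiding hv.1 hu⟩, fun huI => hu.1 huI.1⟩
  · rintro ⟨⟨a, ⟨haI, haS⟩, hau⟩, hu⟩
    have huS : u ∉ S := fun huS => haS (hS.mem_of_reflTransGen hau.to_reflTransGen huS)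
    have huI : u ∉ I := fun huI => hu ⟨huI, huS⟩
    obtain ⟨v, hvI, hav, huv⟩ := exists_mem_desAvoiding_of_reflTransGen hau.to_reflTransGen haI huI
    exact ⟨v, ⟨hvI, fun hvS => haS (hS.mem_of_reflTransGen hav hvS)⟩, huv⟩

/-- `⋃_{v ∈ I \ S} Des(v, I) = Des(I \ S) \ (I \ S)`. -/
theorem union_desAvoiding_eq {V : Type*} [Fintype V] (E : V → V → Prop)
    (hacyc : Acyclic E) (S I : Set V) (hS : IsPrefixSet E S) :
    (⋃ v ∈ I \ S, DesAvoiding E I v)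
      = {u | ∃ a ∈ I \ S, TransGen E a u} \ (I \ S) :=
  union_desAvoiding_eq_general E S I hS
end

section
/- In the mutilated DAG G^I obtained from a DAG G by deleting all edges into vertices of I, for v ∈ I and u ∉ I the following are equivalent: (a) there is a path between u and v in G^I that is active given the empty conditioning set (i.e., a path with no colliders), and (b) there is a directed path in G from v to u intersecting I only at v. -/
open Relation

/-! A collider-free path read from `v` is directed as soon as its first edge leaves `v`, since an
edge pointing back would create a collider. In `G^I` the vertex `v ∈ I` has no parents, so a
collider-free path from `v` to `u` is a directed path of `G^I`, hence of `G`, and every vertex after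
`v` has a parent in `G^I` and so lies outside `I`. Conversely, a directed path of `G` from `v`
meeting `I` only at `v` is simple by acyclicity, is a path of `G^I`, and has no collider, since a
collider on a directed path closes a 2-cycle. -/

section Paths

variable {V : Type*} {R : V → V → Prop} {p : List V} {u v x : V}

lemma IsCollider.mem (h : IsCollider R p x) : x ∈ p := by
  obtain ⟨l₁, a, b, l₂, rfl, -, -⟩ := h
  simp

lemma activePath_empty_iff : ActivePath R ∅ p ↔ ∀ x, ¬ IsCollider R p x :=
  ⟨fun h x hx => (h.1 x hx.mem hx).choose_spec.2,
    fun h => ⟨fun x _ hx => absurd hx (h x), fun _ _ _ => Set.notMem_empty _⟩⟩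

lemma isCollider_reverse : IsCollider R p.reverse x ↔ IsCollider R p x := by
  suffices ∀ q : List V, IsCollider R q x → IsCollider R q.reverse x from
    ⟨fun h => p.reverse_reverse ▸ this _ h, this p⟩
  rintro q ⟨l₁, a, b, l₂, rfl, ha, hb⟩
  exact ⟨l₂.reverse, b, a, l₁.reverse, by simp, hb, ha⟩

lemma IsPathBetween.reverse (h : IsPathBetween R u v p) : IsPathBetween R v u p.reverse :=
  ⟨List.isChain_reverse.mpr (h.1.imp fun _ _ => Or.symm), List.nodup_reverse.mpr h.2.1,
    by simpa using h.2.2.2, by simpa using h.2.2.1⟩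

lemma DirPath.isPathBetween (h : DirPath R u v p) (hnd : p.Nodup) : IsPathBetween R u v p :=
  ⟨h.1.imp fun _ _ => Or.inl, hnd, h.2⟩

lemma isChain_and_right_iff {P : V → Prop} :
    p.IsChain (fun a b => R a b ∧ P b) ↔ p.IsChain R ∧ ∀ x ∈ p.tail, P x := by
  induction p with
  | nil => simp
  | cons a l ih =>
    cases l with
    | nil => simp
    | cons b l =>
      rw [List.isChain_cons_cons, List.isChain_cons_cons, ih]
      simp only [List.tail_cons, List.forall_mem_cons]
      tauto

lemma isChain_cons_of_not_isCollider {l : List V} (hadj : (v :: l).IsChain (Adjacent R))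
    (hfirst : ∀ w ∈ l.head?, R v w) (hnc : ∀ x, ¬ IsCollider R (v :: l) x) :
    (v :: l).IsChain R := by
  induction l generalizing v with
  | nil => exact .singleton v
  | cons w l ih =>
    have hvw : R v w := hfirst w rfl
    refine .cons_cons hvw (ih hadj.tail (fun b hb => ?_) fun x ⟨l₁, a, b, l₂, h, ha, hb⟩ => ?_)
    · obtain ⟨t, rfl⟩ := List.head?_eq_some_iff.mp hb
      exact (hadj.tail.rel_head? hb).resolve_right fun hbw => hnc w ⟨[], v, b, t, rfl, hvw, hbw⟩
    · exact hnc x ⟨v :: l₁, a, b, l₂, by rw [h]; rfl, ha, hb⟩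

lemma isChain_of_not_isCollider (hadj : p.IsChain (Adjacent R))
    (hhead : p.head? = some v) (hsrc : ∀ a, ¬ R a v) (hnc : ∀ x, ¬ IsCollider R p x) :
    p.IsChain R := by
  obtain ⟨l, rfl⟩ := List.head?_eq_some_iff.mp hhead
  exact isChain_cons_of_not_isCollider hadj
    (fun w hw => (hadj.rel_head? hw).resolve_right (hsrc w)) hnc

end Paths

section Acyclic

variable {V : Type*} {R : V → V → Prop} {p : List V}

lemma Acyclic.mono {S : V → V → Prop} (hR : Acyclic R) (h : ∀ a b, S a b → R a b) :
    Acyclic S :=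
  fun v hv => hR v (TransGen.mono h v v hv)

lemma Acyclic.nodup_of_isChain (hR : Acyclic R) (h : p.IsChain R) : p.Nodup := by
  have hpair : p.Pairwise (TransGen R) := (h.imp fun _ _ => TransGen.single).pairwise
  refine hpair.imp ?_
  rintro a _ hab rfl
  exact hR a hab

lemma Acyclic.not_isCollider_of_isChain (hR : Acyclic R) (h : p.IsChain R) (x : V) :
    ¬ IsCollider R p x := by
  rintro ⟨l₁, a, b, l₂, rfl, -, hbx⟩
  have hxb : R x b := List.isChain_iff_forall_rel_of_append_cons_cons.mp h
    (l₁ := l₁ ++ [a]) (l₂ := l₂) (by simp)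
  exact hR x (.head hxb (.single hbx))

end Acyclic

theorem mutilated_dconn_iff_dirPath_general {V : Type*} (E : V → V → Prop)
    (hacyc : Acyclic E) (I : Set V) (u v : V) (hv : v ∈ I) :
    DConn (fun a b => E a b ∧ b ∉ I) (∅ : Set V) u v ↔
      ∃ p, DirPath E v u p ∧ ∀ x ∈ p, x ∈ I → x = v := by
  set R : V → V → Prop := fun a b => E a b ∧ b ∉ I
  constructor
  · rintro ⟨p, hpath, hact⟩
    obtain ⟨hadj, -, hhead, hlast⟩ := hpath.reverse
    have hdir : p.reverse.IsChain R := isChain_of_not_isCollider hadj hhead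
      (fun _ h => h.2 hv) fun x hx => activePath_empty_iff.mp hact x (isCollider_reverse.mp hx)
    obtain ⟨hE, hI⟩ := isChain_and_right_iff.mp hdir
    refine ⟨p.reverse, ⟨hE, hhead, hlast⟩, fun x hx hxI => ?_⟩
    obtain ⟨t, ht⟩ := List.head?_eq_some_iff.mp hhead
    rw [ht] at hx hI
    exact (List.mem_cons.mp hx).resolve_right fun hxt => hI x hxt hxI
  · rintro ⟨p, hdir, hI⟩
    have hnd := hacyc.nodup_of_isChain hdir.1
    obtain ⟨t, rfl⟩ := List.head?_eq_some_iff.mp hdir.2.1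
    have hchain : (v :: t).IsChain R := isChain_and_right_iff.mpr
      ⟨hdir.1, fun x hx hxI => (List.nodup_cons.mp hnd).1 (hI x (.tail v hx) hxI ▸ hx)⟩
    refine ⟨(v :: t).reverse, (DirPath.isPathBetween ⟨hchain, hdir.2⟩ hnd).reverse,
      activePath_empty_iff.mpr fun x hx => ?_⟩
    exact (hacyc.mono fun _ _ h => h.1).not_isCollider_of_isChain hchain x (isCollider_reverse.mp hx)

/-- in the mutilated DAG `G^I` (all edges into `I` removed), for `v ∈ I`
and `u ∉ I`: `u` and `v` are d-connected given `∅` (i.e., joined by a collider-free path)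
iff there is a directed path in `G` from `v` to `u` intersecting `I` only at `v`. -/
theorem mutilated_dconn_iff_dirPath {V : Type*} [Fintype V] (E : V → V → Prop)
    (hacyc : Acyclic E) (I : Set V) (u v : V) (hv : v ∈ I) (hu : u ∉ I) :
    DConn (fun a b => E a b ∧ b ∉ I) (∅ : Set V) u v ↔
      ∃ p, DirPath E v u p ∧ ∀ x ∈ p, x ∈ I → x = v :=
  mutilated_dconn_iff_dirPath_general E hacyc I u v hv
end

section
/- Let G be a finite DAG and S ⊆ V a prefix subset. If u, v ∈ src(S̄) are distinct, then u and v are d-separated given S in G. -/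
open Relation

/-!
On a path that is active given a prefix set `S`, colliders lie in `S` (they have descendants in
`S`) and non-colliders lie outside `S`. Walk from `u` towards `v`. The first edge cannot point
into `u`: its tail would be in `S`, hence a collider, so `u` would be its parent and lie in `S`.
Once an edge `a → x` with `a ∉ S` has been traversed, `x ∉ S` is a non-collider, so the next
edge leaves `x` forwards. Hence the last edge enters `v` from a vertex outside `S`, contradicting
`v ∈ src(S̄)`.
-/

section ActivePath

variable {V : Type*} {E : V → V → Prop} {C : Set V}

theorem IsPrefixSet.mem_of_reflTransGen_s5 (hC : IsPrefixSet E C) {x d : V}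
    (h : ReflTransGen E x d) (hd : d ∈ C) : x ∈ C := by
  induction h with
  | refl => exact hd
  | tail _ e ih => exact ih (hC _ _ e hd)

theorem IsCollider.rel_left_of_nodup {l q : List V} {a x : V} (hnd : (l ++ a :: x :: q).Nodup)
    (h : IsCollider E (l ++ a :: x :: q) x) : E a x := by
  have hx : x ∉ l ++ [a] ∧ x ∉ q := by
    simp only [List.nodup_append, List.nodup_cons, List.mem_cons] at hnd
    grind
  obtain ⟨l₁, a₁, b₁, l₂, heq, ha₁, -⟩ := h
  have hsplit := (List.append_cons_inj_of_notMem hx.1 hx.2).1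
    (by simpa using heq : (l ++ [a]) ++ x :: q = (l₁ ++ [a₁]) ++ x :: b₁ :: l₂)
  rwa [List.singleton_inj.1 (List.append_inj' hsplit.1 rfl).2]

theorem ActivePath.mem_of_isCollider (hC : IsPrefixSet E C) {p : List V} (h : ActivePath E C p)
    {x : V} (hx : x ∈ p) (hcol : IsCollider E p x) : x ∈ C := by
  obtain ⟨d, hxd, hd⟩ := h.1 x hx hcol
  exact hC.mem_of_reflTransGen_s5 hxd hd

theorem ActivePath.pred_mem_of_mem (hC : IsPrefixSet E C) {l q : List V} {a x : V}
    (h : ActivePath E C (l ++ a :: x :: q)) (hnd : (l ++ a :: x :: q).Nodup) (hx : x ∈ C) :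
    a ∈ C := by
  have hcol : IsCollider E (l ++ a :: x :: q) x := by
    by_contra hcol
    exact h.2 x (by simp) hcol hx
  exact hC _ _ (hcol.rel_left_of_nodup hnd) hx

theorem ActivePath.rel_of_rel_of_notMem (hC : IsPrefixSet E C) {l q : List V} {a x b : V}
    (h : ActivePath E C (l ++ a :: x :: b :: q))
    (hadj : (l ++ a :: x :: b :: q).IsChain (Adjacent E)) (hax : E a x) (hx : x ∉ C) : E x b := by
  refine (List.isChain_cons_cons.1 hadj.right_of_append.tail).1.resolve_right fun hbx => hx ?_
  exact h.mem_of_isCollider hC (by simp) ⟨l, a, b, q, rfl, hax, hbx⟩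

theorem ActivePath.exists_rel_of_getLast? (hC : IsPrefixSet E C) {l q : List V} {a x v : V}
    (h : ActivePath E C (l ++ a :: x :: q)) (hadj : (l ++ a :: x :: q).IsChain (Adjacent E))
    (hv : (l ++ a :: x :: q).getLast? = some v) (ha : a ∉ C) (hax : E a x) : ∃ w ∉ C, E w v := by
  induction q generalizing l a x with
  | nil =>
    obtain rfl : x = v := by simpa using hv
    exact ⟨a, ha, hax⟩
  | cons b q ih =>
    have hx : x ∉ C := fun hx => ha (hC _ _ hax hx)
    have hxb : E x b := h.rel_of_rel_of_notMem hC hadj hax hx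
    have hsplit : l ++ a :: x :: b :: q = (l ++ [a]) ++ x :: b :: q := by simp
    rw [hsplit] at h hadj hv
    exact ih h hadj hv hx hxb

end ActivePath

theorem sources_dsep_general {V : Type*} (E : V → V → Prop)
    (S : Set V) (hS : IsPrefixSet E S)
    (u v : V) (hu : u ∈ srcOf E Sᶜ) (hv : v ∈ srcOf E Sᶜ) (huv : u ≠ v) :
    DSep E S u v := by
  rintro ⟨p, ⟨hadj, hnd, hhead, hlast⟩, hact⟩
  obtain ⟨x, q, rfl⟩ : ∃ x q, p = u :: x :: q := by
    match p, hhead, hlast with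
    | [_], rfl, hlast => exact absurd (by simpa using hlast) huv
    | _ :: x :: q, rfl, _ => exact ⟨x, q, rfl⟩
  have hux : E u x := by
    refine (List.isChain_cons_cons.1 hadj).1.resolve_right fun hxu => hu.1 ?_
    exact hact.pred_mem_of_mem (l := []) hS hnd (by simpa using hu.2 x hxu)
  obtain ⟨w, hw, hwv⟩ := hact.exists_rel_of_getLast? (l := []) hS hadj hlast hu.1 hux
  exact hv.2 w hwv hw

/-- distinct sources of `S̄` are d-separated given the prefix set `S`. -/
theorem sources_dsep {V : Type*} [Fintype V] (E : V → V → Prop)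
    (hacyc : Acyclic E) (S : Set V) (hS : IsPrefixSet E S)
    (u v : V) (hu : u ∈ srcOf E Sᶜ) (hv : v ∈ srcOf E Sᶜ) (huv : u ≠ v) :
    DSep E S u v :=
  sources_dsep_general E S hS u v hu hv huv
end

section
/- Let G be a finite DAG, S ⊆ V a prefix subset, and define D_S := { w ∈ S̄ : ∃ u ∈ V, v ∈ S̄ with u,v d-separated given S and u,v d-connected given S ∪ {w} }. Then D_S ∩ src(S̄) = ∅. -/
open Relation

/-- The type-I set `D_S`: vertices `w ∈ S̄` whose conditioning creates a new d-connection
between some `u ∈ V` and `v ∈ S̄` that were d-separated given `S`. -/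
def TypeIset {V : Type*} (E : V → V → Prop) (S : Set V) : Set V :=
  {w | w ∉ S ∧ ∃ u v : V, v ∉ S ∧ DSep E S u v ∧ DConn E (S ∪ {w}) u v}

/-- In a nodup list, a split at a given element is unique. -/
lemma nodup_split_unique {V : Type*} {a : V} :
    ∀ {s1 t1 s2 t2 : List V}, (s1 ++ a :: t1).Nodup →
      s1 ++ a :: t1 = s2 ++ a :: t2 → s1 = s2 ∧ t1 = t2 := by
  intro s1
  induction s1 with
  | nil =>
    intro t1 s2 t2 hnd heq
    cases s2 with
    | nil => simpa using heq
    | cons x s2' =>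
      simp only [List.nil_append, List.cons_append, List.cons.injEq] at heq
      obtain ⟨hx, ht⟩ := heq
      exfalso
      have : a ∈ t1 := by rw [ht]; simp
      simp only [List.nil_append, List.nodup_cons] at hnd
      exact hnd.1 this
  | cons x s1' ih =>
    intro t1 s2 t2 hnd heq
    cases s2 with
    | nil =>
      simp only [List.cons_append, List.nil_append, List.cons.injEq] at heq
      obtain ⟨hx, ht⟩ := heq
      exfalso
      simp only [List.cons_append, List.nodup_cons] at hnd
      subst hx
      exact hnd.1 (by simp)
    | cons y s2' =>
      simp only [List.cons_append, List.cons.injEq] at heq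
      obtain ⟨hxy, ht⟩ := heq
      simp only [List.cons_append, List.nodup_cons] at hnd
      obtain ⟨h1, h2⟩ := ih hnd.2 ht
      exact ⟨by rw [hxy, h1], h2⟩

/-- `D_S ∩ src(S̄) = ∅`. -/
theorem typeIset_disjoint_src {V : Type*} [Fintype V] (E : V → V → Prop)
    (hacyc : Acyclic E) (S : Set V) (hS : IsPrefixSet E S) :
    TypeIset E S ∩ srcOf E Sᶜ = ∅ := by
  ext w
  simp only [Set.mem_inter_iff, Set.mem_empty_iff_false, iff_false, not_and]
  rintro ⟨hwS, u, v, hvS, hsep, p, hp, hact⟩ ⟨hwT, hsrc⟩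
  apply hsep
  refine ⟨p, hp, ?_, ?_⟩
  · intro x hx hcol
    obtain ⟨d, hxd, hdC⟩ := hact.1 x hx hcol
    rcases hdC with h | h
    · exact ⟨d, hxd, h⟩
    · have hdw : d = w := h
      rw [hdw] at hxd
      rcases Relation.ReflTransGen.cases_tail hxd with heq | ⟨y, hxy, hyw⟩
      · -- w = x : w is a collider on p
        have hcolw : IsCollider E p w := by rw [heq]; exact hcol
        exfalso
        obtain ⟨l1, a, b, l2, hp_eq, haw, hbw⟩ := hcolw
        have haS : a ∈ S := by
          have := hsrc a haw
          simpa using this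
        have hanc : ¬ IsCollider E p a := by
          rintro ⟨m1, a', b', m2, heq2, h1, h2⟩
          have hnd : p.Nodup := hp.2.1
          have heq3 : (m1 ++ [a']) ++ a :: b' :: m2 = l1 ++ a :: w :: b :: l2 := by
            rw [← hp_eq, heq2]; simp
          have hnd2 : ((m1 ++ [a']) ++ a :: b' :: m2).Nodup := by
            rw [heq3, ← hp_eq]; exact hnd
          obtain ⟨-, h4⟩ := nodup_split_unique hnd2 heq3
          have hb' : b' = w := by
            simp only [List.cons.injEq] at h4
            exact h4.1
          subst hb'
          exact hacyc a (Relation.TransGen.head haw (Relation.TransGen.single h2))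
        have hap : a ∈ p := by rw [hp_eq]; simp
        exact hact.2 a hap hanc (Or.inl haS)
      · have hyS : y ∈ S := by
          have := hsrc y hyw
          simpa using this
        exact ⟨y, hxy, hyS⟩
  · intro x hx hncol
    exact fun hxS => hact.2 x hx hncol (Or.inl hxS)
end

section
/- Let G be a finite DAG and S ⊆ V a prefix subset. Any path P between two vertices of S̄ that is active given S contains no vertex of S and no collider; consequently P is a trek (a path of the form x ← ⋯ ← t → ⋯ → y with top t). -/
open Relation

lemma rtg_mem_prefix {V : Type*} {E : V → V → Prop} {S : Set V} (hS : IsPrefixSet E S)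
    {x d : V} (h : ReflTransGen E x d) : d ∈ S → x ∈ S := by
  induction h with
  | refl => exact id
  | tail h e ih => exact fun hd => ih (hS _ _ e hd)

lemma no_S_vertex {V : Type*} [DecidableEq V] {E : V → V → Prop} {S : Set V}
    (hS : IsPrefixSet E S) (p : List V) (hnd : p.Nodup)
    (hact2 : ∀ x ∈ p, ¬ IsCollider E p x → x ∉ S) : ∀ x ∈ p, x ∉ S := by
  have key : ∀ n : ℕ, ∀ x ∈ p, x ∈ S → n ≤ p.idxOf x := by
    intro n
    induction n with
    | zero => intro x _ _; exact Nat.zero_le _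
    | succ n ih =>
      intro x hm hxS
      have hcol : IsCollider E p x := by
        by_contra h; exact hact2 x hm h hxS
      obtain ⟨l1, a, b, l2, heq, ea, _⟩ := hcol
      have haS : a ∈ S := hS a x ea hxS
      have ham : a ∈ p := by rw [heq]; simp
      have hnd' := hnd
      rw [heq] at hnd'
      simp only [List.nodup_append, List.nodup_cons] at hnd'
      have hanl1 : a ∉ l1 := fun h => hnd'.2.2 a h a (by simp) rfl
      have hxnl1 : x ∉ l1 := fun h => hnd'.2.2 x h x (by simp) rfl
      have hxa : x ≠ a := fun h => hnd'.2.1.1 (by simp [h])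
      have hia : p.idxOf a = l1.length := by
        rw [heq, List.idxOf_append_of_notMem hanl1, List.idxOf_cons_self]
        omega
      have hix : p.idxOf x = l1.length + 1 := by
        have h2 : p = (l1 ++ [a]) ++ x :: b :: l2 := by rw [heq]; simp
        rw [h2, List.idxOf_append_of_notMem (by
          simp only [List.mem_append, List.mem_singleton]
          rintro (h | h); exact hxnl1 h; exact hxa h),
          List.idxOf_cons_self]
        simp
      have := ih a ham haS
      omega
  intro x hm hxS
  have h1 := key (p.length + 1) x hm hxS
  have h2 : p.idxOf x < p.length := List.idxOf_lt_length_iff.mpr hm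
  omega

lemma trek_decomp {V : Type*} (E : V → V → Prop) :
    ∀ p : List V, p ≠ [] → p.Chain' (Adjacent E) → (∀ x, ¬ IsCollider E p x) →
    ∃ l1 t l2, p = l1 ++ t :: l2 ∧ (t :: l1.reverse).Chain' E ∧ (t :: l2).Chain' E := by
  intro p
  induction p with
  | nil => intro h; exact absurd rfl h
  | cons x q ih =>
    intro _ hch hnc
    cases q with
    | nil => exact ⟨[], x, [], rfl, List.isChain_singleton x, List.isChain_singleton x⟩
    | cons y rest =>
      simp only [List.Chain', List.isChain_cons_cons] at hch
      obtain ⟨hadj, hch'⟩ := hch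
      have hnc' : ∀ z, ¬ IsCollider E (y :: rest) z := by
        rintro z ⟨l1, a, b, l2, heq, ea, eb⟩
        exact hnc z ⟨x :: l1, a, b, l2, by rw [List.cons_append, heq], ea, eb⟩
      obtain ⟨l1, t, l2, heq, hc1, hc2⟩ := ih (List.cons_ne_nil _ _) hch' hnc'
      have hc1' : List.Chain' (flip E) (l1 ++ [t]) := by
        unfold List.Chain'
        rw [← List.isChain_reverse]
        simpa [flip, List.Chain'] using hc1
      rcases hadj with hxy | hyx
      · -- forward edge E x y : l1 must be empty
        cases l1 with
        | nil =>
          simp only [List.nil_append] at heq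
          obtain ⟨rfl, rfl⟩ := List.cons.inj heq
          exact ⟨[], x, _, rfl, List.isChain_singleton x, List.isChain_cons_cons.mpr ⟨hxy, hc2⟩⟩
        | cons a l1' =>
          rw [List.cons_append] at heq
          obtain ⟨rfl, hrest⟩ := List.cons.inj heq
          exfalso
          rw [List.cons_append] at hc1'
          cases l1' with
          | nil =>
            simp only [List.nil_append] at hrest hc1'
            have hty : E t y := (List.isChain_cons_cons.mp hc1').1
            exact hnc y ⟨[], x, t, l2, by rw [hrest]; rfl, hxy, hty⟩
          | cons c l1'' =>
            rw [List.cons_append] at hc1' hrest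
            have hcy : E c y := (List.isChain_cons_cons.mp hc1').1
            exact hnc y ⟨[], x, c, l1'' ++ t :: l2, by rw [hrest]; rfl, hxy, hcy⟩
      · -- backward edge E y x
        refine ⟨x :: l1, t, l2, by rw [heq, List.cons_append], ?_, hc2⟩
        rw [show (t :: (x :: l1).reverse) = ((x :: l1) ++ [t]).reverse by simp,
          List.Chain', List.isChain_reverse]
        rw [List.cons_append]
        cases l1 with
        | nil =>
          simp only [List.nil_append] at heq
          obtain ⟨rfl, rfl⟩ := List.cons.inj heq
          exact List.isChain_cons_cons.mpr ⟨hyx, List.isChain_singleton _⟩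
        | cons a l1' =>
          rw [List.cons_append] at heq
          obtain ⟨rfl, -⟩ := List.cons.inj heq
          rw [List.cons_append] at hc1'
          exact List.isChain_cons_cons.mpr ⟨hyx, hc1'⟩

/-- a path between two vertices of `S̄` that is active given the prefix set `S`
contains no vertex of `S` and no collider; consequently it is a trek
`x ← ⋯ ← t → ⋯ → y` with top `t`. -/
theorem active_path_given_prefix_is_trek {V : Type*} [Fintype V] (E : V → V → Prop)
    (hacyc : Acyclic E) (S : Set V) (hS : IsPrefixSet E S)
    (u v : V) (hu : u ∉ S) (hv : v ∉ S)
    (p : List V) (hp : IsPathBetween E u v p) (hact : ActivePath E S p) :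
    (∀ x ∈ p, x ∉ S) ∧ (∀ x, ¬ IsCollider E p x) ∧
      ∃ l1 t l2, p = l1 ++ t :: l2 ∧
        (t :: l1.reverse).Chain' E ∧ (t :: l2).Chain' E := by
  classical
  obtain ⟨hch, hnd, hhead, hlast⟩ := hp
  have hne : p ≠ [] := by rintro rfl; simp at hhead
  have part1 : ∀ x ∈ p, x ∉ S := no_S_vertex hS p hnd hact.2
  have part2 : ∀ x, ¬ IsCollider E p x := by
    intro x hcol
    have hxp : x ∈ p := by
      obtain ⟨l1, a, b, l2, heq, -, -⟩ := hcol
      rw [heq]; simp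
    obtain ⟨d, hrd, hdS⟩ := hact.1 x hxp hcol
    exact part1 x hxp (rtg_mem_prefix hS hrd hdS)
  exact ⟨part1, part2, trek_decomp E p hne hch part2⟩
end
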